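/- arXiv:2207.05785 — 4 statements merged into one kernel-verified Lean document; each statement's English description precedes it below -/
import Mathlib

section
/- For a c-category task with c ≥ 2, the choice k = c of the number of classifiers minimizes the disagreement ratio among all admissible choices: for every k with 2 ≤ k ≤ c one has P_c^c ≤ P_c^k, and moreover P_c^c = (c! : ℝ) / c^c. -/
/-- The disagreement ratio `P c k`: the proportion of `k`-tuples of labels from
`c` categories whose entries are pairwise distinct. -/
noncomputable def disagreementRatio (c k : ℕ) : ℝ :=
  (Nat.descFactorial c k : ℝ) / (c : ℝ) ^ k

lemma disagreementRatio_succ_le (c k : ℕ) (hc : 1 ≤ c) :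
    disagreementRatio c (k + 1) ≤ disagreementRatio c k := by
  have hc0 : (0:ℝ) < (c:ℝ) := by exact_mod_cast hc
  have hpk : (0:ℝ) < (c:ℝ) ^ k := pow_pos hc0 k
  unfold disagreementRatio
  rw [Nat.descFactorial_succ, pow_succ]
  push_cast
  rw [div_le_div_iff₀ (by positivity) hpk]
  have h1 : ((c - k : ℕ) : ℝ) ≤ (c : ℝ) := by
    exact_mod_cast Nat.sub_le c k
  have h2 : (0:ℝ) ≤ (Nat.descFactorial c k : ℝ) := by positivity
  nlinarith [mul_le_mul_of_nonneg_right h1 h2, hpk.le]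

lemma disagreementRatio_anti (c : ℕ) (hc : 1 ≤ c) {k m : ℕ} (h : k ≤ m) :
    disagreementRatio c m ≤ disagreementRatio c k := by
  induction m with
  | zero => simp_all
  | succ n ih =>
    rcases Nat.eq_or_lt_of_le h with rfl | h'
    · exact le_refl _
    · exact le_trans (disagreementRatio_succ_le c n hc) (ih (Nat.lt_succ_iff.mp h'))

/-- For a `c`-category task with `c ≥ 2`, the choice `k = c` of the number of
classifiers minimizes the disagreement ratio among all admissible choices:
for every `k` with `2 ≤ k ≤ c` one has `P_c^c ≤ P_c^k`, and moreover
`P_c^c = c! / c^c`. -/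
theorem stmt4 (c : ℕ) (hc : 2 ≤ c) :
    (∀ k : ℕ, 2 ≤ k → k ≤ c → disagreementRatio c c ≤ disagreementRatio c k) ∧
    disagreementRatio c c = (Nat.factorial c : ℝ) / (c : ℝ) ^ c := by
  constructor
  · intro k _ hk
    exact disagreementRatio_anti c (by omega) hk
  · unfold disagreementRatio
    rw [Nat.descFactorial_self]
end

section
/- Let X be a measurable space, Y a countable type with measurable singletons, μ_S and μ_T probability measures on X, and f_S, f_T : X → Y measurable labeling functions. For measurable h : X → Y write ε_S(h) = μ_S {x | h x ≠ f_S x} and ε_T(h) = μ_T {x | h x ≠ f_T x}, and for measurable h, h' write ε_S(h,h') = μ_S {x | h x ≠ h' x}, ε_T(h,h') = μ_T {x | h x ≠ h' x} (values taken in ℝ via μ.real, which is legitimate since μ_S, μ_T are probability measures). Then for all measurable h, h' : X → Y: ε_T(h) ≤ ε_S(h) + |ε_T(h,h') − ε_S(h,h')| + ε_S(h') + ε_T(h'). -/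
open MeasureTheory

lemma tri_aux {X Y : Type*} [MeasurableSpace X] (μ : Measure X) [IsProbabilityMeasure μ]
    (a b c : X → Y) :
    (μ {x | a x ≠ c x}).toReal ≤ (μ {x | a x ≠ b x}).toReal + (μ {x | b x ≠ c x}).toReal := by
  have hsub : {x | a x ≠ c x} ⊆ {x | a x ≠ b x} ∪ {x | b x ≠ c x} := by
    intro x hx
    by_cases hab : a x = b x
    · right; simp only [Set.mem_setOf_eq]; rw [← hab]; exact hx
    · left; exact hab
  have h1 : μ {x | a x ≠ c x} ≤ μ {x | a x ≠ b x} + μ {x | b x ≠ c x} :=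
    (measure_mono hsub).trans (measure_union_le _ _)
  have h2 := ENNReal.toReal_mono (by finiteness) h1
  rwa [ENNReal.toReal_add (by finiteness) (by finiteness)] at h2

/-- Population-level inequality underlying the classical target error bound:
for measurable hypotheses `h, h' : X → Y`, probability measures `μS, μT` on `X`
and measurable labeling functions `fS, fT : X → Y`,
`ε_T(h) ≤ ε_S(h) + |ε_T(h,h') − ε_S(h,h')| + ε_S(h') + ε_T(h')`,
all error values taken in `ℝ`. -/
theorem stmt8 {X Y : Type*} [MeasurableSpace X] [MeasurableSpace Y] [Countable Y]
    [MeasurableSingletonClass Y]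
    (μS μT : Measure X) [IsProbabilityMeasure μS] [IsProbabilityMeasure μT]
    (fS fT : X → Y) (hfS : Measurable fS) (hfT : Measurable fT)
    (h h' : X → Y) (hh : Measurable h) (hh' : Measurable h') :
    (μT {x | h x ≠ fT x}).toReal ≤
      (μS {x | h x ≠ fS x}).toReal
      + |(μT {x | h x ≠ h' x}).toReal - (μS {x | h x ≠ h' x}).toReal|
      + (μS {x | h' x ≠ fS x}).toReal
      + (μT {x | h' x ≠ fT x}).toReal := by
  have t1 := tri_aux μT h h' fT
  have t2 := tri_aux μS h fS h'
  have habs : (μT {x | h x ≠ h' x}).toReal - (μS {x | h x ≠ h' x}).toReal ≤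
      |(μT {x | h x ≠ h' x}).toReal - (μS {x | h x ≠ h' x}).toReal| := le_abs_self _
  have t2' : (μS {x | h x ≠ h' x}).toReal ≤
      (μS {x | h x ≠ fS x}).toReal + (μS {x | h' x ≠ fS x}).toReal := by
    have hset : {x | fS x ≠ h' x} = {x | h' x ≠ fS x} := by ext x; simp [ne_comm]
    rw [hset] at t2
    linarith
  linarith
end

section
/- Let X be a measurable space, Y a countable type with measurable singletons, μ_S and μ_T probability measures on X, and f_S, f_T : X → Y measurable labeling functions. Let h_1, …, h_k : X → Y be measurable (k ≥ 1) and define the averaged errors ε_S(H_k) = (1/k) Σ_{i=1}^k μ_S {x | h_i x ≠ f_S x}, ε_T(H_k) = (1/k) Σ_{i=1}^k μ_T {x | h_i x ≠ f_T x}, and for a measurable h* : X → Y the averaged disagreements ε_S(H_k, h*) = (1/k) Σ_{i=1}^k μ_S {x | h_i x ≠ h* x} and ε_T(H_k, h*) = (1/k) Σ_{i=1}^k μ_T {x | h_i x ≠ h* x} (real values via μ.real). Then for every measurable h* : X → Y: ε_T(H_k) ≤ ε_S(H_k) + |ε_T(H_k, h*) − ε_S(H_k, h*)| + ε_S(h*)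 + ε_T(h*), where ε_S(h*) = μ_S {x | h* x ≠ f_S x} and ε_T(h*) = μ_T {x | h* x ≠ f_T x}. -/
open MeasureTheory Finset

lemma tri_err {X Y : Type*} [MeasurableSpace X] (μ : Measure X) [IsFiniteMeasure μ]
    (a b c : X → Y) :
    (μ {x | a x ≠ b x}).toReal ≤ (μ {x | a x ≠ c x}).toReal + (μ {x | c x ≠ b x}).toReal := by
  have hsub : {x | a x ≠ b x} ⊆ {x | a x ≠ c x} ∪ {x | c x ≠ b x} := by
    intro x hx
    by_contra hc
    simp only [Set.mem_union, Set.mem_setOf_eq, not_or, not_not] at hc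
    exact hx (hc.1.trans hc.2)
  have hle : μ {x | a x ≠ b x} ≤ μ {x | a x ≠ c x} + μ {x | c x ≠ b x} :=
    (measure_mono hsub).trans (measure_union_le _ _)
  have := ENNReal.toReal_mono (ENNReal.add_ne_top.2 ⟨measure_ne_top μ _, measure_ne_top μ _⟩) hle
  rwa [ENNReal.toReal_add (measure_ne_top μ _) (measure_ne_top μ _)] at this

/-- Population-level inequality in the proof of the target error bound for the
`∩HΔH` hypothesis space: for measurable hypotheses `h 1, …, h k : X → Y` (`k ≥ 1`)
with errors and disagreements averaged over the `k` hypotheses, and any measurable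
`h* : X → Y`,
`ε_T(H_k) ≤ ε_S(H_k) + |ε_T(H_k,h*) − ε_S(H_k,h*)| + ε_S(h*) + ε_T(h*)`. -/
theorem stmt9 {X Y : Type*} [MeasurableSpace X] [MeasurableSpace Y] [Countable Y]
    [MeasurableSingletonClass Y]
    (μS μT : Measure X) [IsProbabilityMeasure μS] [IsProbabilityMeasure μT]
    (fS fT : X → Y) (hfS : Measurable fS) (hfT : Measurable fT)
    (k : ℕ) (hk : 1 ≤ k) (h : Fin k → X → Y) (hh : ∀ i, Measurable (h i))
    (hstar : X → Y) (hhstar : Measurable hstar) :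
    (1 / (k : ℝ)) * ∑ i : Fin k, (μT {x | h i x ≠ fT x}).toReal ≤
      (1 / (k : ℝ)) * ∑ i : Fin k, (μS {x | h i x ≠ fS x}).toReal
      + |(1 / (k : ℝ)) * ∑ i : Fin k, (μT {x | h i x ≠ hstar x}).toReal
          - (1 / (k : ℝ)) * ∑ i : Fin k, (μS {x | h i x ≠ hstar x}).toReal|
      + (μS {x | hstar x ≠ fS x}).toReal
      + (μT {x | hstar x ≠ fT x}).toReal := by
  have hk0 : (k : ℝ) ≠ 0 := by positivity
  have hkpos : (0 : ℝ) < 1 / (k : ℝ) := by positivity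
  set cT : ℝ := (μT {x | hstar x ≠ fT x}).toReal with hcT
  set cS : ℝ := (μS {x | hstar x ≠ fS x}).toReal with hcS
  -- step 1: εT(Hk) ≤ εT(Hk,h*) + εT(h*)
  have h1 : (1 / (k : ℝ)) * ∑ i : Fin k, (μT {x | h i x ≠ fT x}).toReal ≤
      (1 / (k : ℝ)) * ∑ i : Fin k, (μT {x | h i x ≠ hstar x}).toReal + cT := by
    have hsum : ∑ i : Fin k, (μT {x | h i x ≠ fT x}).toReal ≤
        ∑ i : Fin k, ((μT {x | h i x ≠ hstar x}).toReal + cT) :=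
      Finset.sum_le_sum fun i _ => tri_err μT (h i) fT hstar
    rw [Finset.sum_add_distrib, Finset.sum_const, Finset.card_univ, Fintype.card_fin,
      nsmul_eq_mul] at hsum
    calc (1 / (k : ℝ)) * ∑ i : Fin k, (μT {x | h i x ≠ fT x}).toReal
        ≤ (1 / (k : ℝ)) * (∑ i : Fin k, (μT {x | h i x ≠ hstar x}).toReal + (k : ℝ) * cT) :=
          by apply mul_le_mul_of_nonneg_left hsum hkpos.le
      _ = (1 / (k : ℝ)) * ∑ i : Fin k, (μT {x | h i x ≠ hstar x}).toReal + cT := by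
          field_simp
  -- step 2: εS(Hk,h*) ≤ εS(Hk) + εS(h*)
  have h2 : (1 / (k : ℝ)) * ∑ i : Fin k, (μS {x | h i x ≠ hstar x}).toReal ≤
      (1 / (k : ℝ)) * ∑ i : Fin k, (μS {x | h i x ≠ fS x}).toReal + cS := by
    have hsum : ∑ i : Fin k, (μS {x | h i x ≠ hstar x}).toReal ≤
        ∑ i : Fin k, ((μS {x | h i x ≠ fS x}).toReal + cS) :=
      Finset.sum_le_sum fun i _ => by
        have := tri_err μS (h i) hstar fS
        have heq : (μS {x | fS x ≠ hstar x}).toReal = cS := by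
          rw [hcS]
          have : {x | fS x ≠ hstar x} = {x | hstar x ≠ fS x} := by
            ext x; exact ne_comm
          rw [this]
        linarith [this, heq.le]
    rw [Finset.sum_add_distrib, Finset.sum_const, Finset.card_univ, Fintype.card_fin,
      nsmul_eq_mul] at hsum
    calc (1 / (k : ℝ)) * ∑ i : Fin k, (μS {x | h i x ≠ hstar x}).toReal
        ≤ (1 / (k : ℝ)) * (∑ i : Fin k, (μS {x | h i x ≠ fS x}).toReal + (k : ℝ) * cS) :=
          by apply mul_le_mul_of_nonneg_left hsum hkpos.le
      _ = (1 / (k : ℝ)) * ∑ i : Fin k, (μS {x | h i x ≠ fS x}).toReal + cS := by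
          field_simp
  have h3 : (1 / (k : ℝ)) * ∑ i : Fin k, (μT {x | h i x ≠ hstar x}).toReal ≤
      (1 / (k : ℝ)) * ∑ i : Fin k, (μS {x | h i x ≠ hstar x}).toReal +
      |(1 / (k : ℝ)) * ∑ i : Fin k, (μT {x | h i x ≠ hstar x}).toReal
          - (1 / (k : ℝ)) * ∑ i : Fin k, (μS {x | h i x ≠ hstar x}).toReal| := by
    have := le_abs_self ((1 / (k : ℝ)) * ∑ i : Fin k, (μT {x | h i x ≠ hstar x}).toReal
          - (1 / (k : ℝ)) * ∑ i : Fin k, (μS {x | h i x ≠ hstar x}).toReal)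
    linarith
  linarith
end

section
/- Let X be a measurable space, Y a countable type with measurable singletons, μ_S and μ_T probability measures on X, and f_S, f_T : X → Y measurable labeling functions. Let H be a nonempty set of measurable functions X → Y. Define (via μ.real) ε_S(h) = μ_S {x | h x ≠ f_S x}, ε_T(h) = μ_T {x | h x ≠ f_T x}, the HΔH-divergence d = 2 · ⨆_{(h,h') ∈ H × H} |μ_S {x | h x ≠ h' x} − μ_T {x | h x ≠ h' x}| (the supremum exists since all quantities lie in [0,1]), and the joint optimal error λ = ⨅_{h' ∈ H} (ε_S(h') + ε_T(h')). Then for every h ∈ H: ε_T(h) ≤ ε_S(h) + (1/2) · d + λ. -/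
open MeasureTheory

lemma tri_aux_s10 {X : Type*} [MeasurableSpace X] (μ : Measure X) [IsFiniteMeasure μ]
    (A B C : Set X) (hsub : A ⊆ B ∪ C) :
    (μ A).toReal ≤ (μ B).toReal + (μ C).toReal := by
  have h1 : μ A ≤ μ B + μ C := (measure_mono hsub).trans (measure_union_le B C)
  have h2 : μ B + μ C ≠ ⊤ := by
    simp [ENNReal.add_ne_top, measure_ne_top]
  calc (μ A).toReal ≤ (μ B + μ C).toReal := ENNReal.toReal_mono h2 h1
    _ = (μ B).toReal + (μ C).toReal := ENNReal.toReal_add (measure_ne_top _ _) (measure_ne_top _ _)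

/-- Population-level (infinite-sample) form of the target error bound:
for a nonempty class `H` of measurable hypotheses, with
`d = 2 · ⨆_{(h,h') ∈ H × H} |μS {h ≠ h'} − μT {h ≠ h'}|` the `HΔH`-divergence and
`λ = ⨅_{h' ∈ H} (ε_S(h') + ε_T(h'))` the joint optimal error, every `h ∈ H`
satisfies `ε_T(h) ≤ ε_S(h) + (1/2)·d + λ`. -/
theorem stmt10 {X Y : Type*} [MeasurableSpace X] [MeasurableSpace Y] [Countable Y]
    [MeasurableSingletonClass Y]
    (μS μT : Measure X) [IsProbabilityMeasure μS] [IsProbabilityMeasure μT]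
    (fS fT : X → Y) (hfS : Measurable fS) (hfT : Measurable fT)
    (H : Set (X → Y)) (hH : H.Nonempty) (hmeas : ∀ h ∈ H, Measurable h) :
    ∀ h ∈ H,
      (μT {x | h x ≠ fT x}).toReal ≤
        (μS {x | h x ≠ fS x}).toReal
        + (1 / 2) *
            (2 * ⨆ p : H × H,
              |(μS {x | (p.1 : X → Y) x ≠ (p.2 : X → Y) x}).toReal
                - (μT {x | (p.1 : X → Y) x ≠ (p.2 : X → Y) x}).toReal|)
        + ⨅ h' : H,
            ((μS {x | (h' : X → Y) x ≠ fS x}).toReal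
              + (μT {x | (h' : X → Y) x ≠ fT x}).toReal) := by
  intro h hh
  have hne : Nonempty H := hH.to_subtype
  set S := ⨆ p : H × H,
      |(μS {x | (p.1 : X → Y) x ≠ (p.2 : X → Y) x}).toReal
        - (μT {x | (p.1 : X → Y) x ≠ (p.2 : X → Y) x}).toReal| with hSdef
  have hbdd : BddAbove (Set.range fun p : H × H =>
      |(μS {x | (p.1 : X → Y) x ≠ (p.2 : X → Y) x}).toReal
        - (μT {x | (p.1 : X → Y) x ≠ (p.2 : X → Y) x}).toReal|) := by
    refine ⟨2, ?_⟩
    rintro r ⟨p, rfl⟩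
    have h1 : (μS {x | (p.1 : X → Y) x ≠ (p.2 : X → Y) x}).toReal ≤ 1 := by
      have := prob_le_one (μ := μS) (s := {x | (p.1 : X → Y) x ≠ (p.2 : X → Y) x})
      simpa using ENNReal.toReal_mono ENNReal.one_ne_top this
    have h2 : (μT {x | (p.1 : X → Y) x ≠ (p.2 : X → Y) x}).toReal ≤ 1 := by
      have := prob_le_one (μ := μT) (s := {x | (p.1 : X → Y) x ≠ (p.2 : X → Y) x})
      simpa using ENNReal.toReal_mono ENNReal.one_ne_top this
    have h3 : (0:ℝ) ≤ (μS {x | (p.1 : X → Y) x ≠ (p.2 : X → Y) x}).toReal := ENNReal.toReal_nonneg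
    have h4 : (0:ℝ) ≤ (μT {x | (p.1 : X → Y) x ≠ (p.2 : X → Y) x}).toReal := ENNReal.toReal_nonneg
    rw [abs_le]; constructor <;> linarith
  have key : ∀ h' : H,
      (μT {x | h x ≠ fT x}).toReal - (μS {x | h x ≠ fS x}).toReal - S ≤
        (μS {x | (h' : X → Y) x ≠ fS x}).toReal
          + (μT {x | (h' : X → Y) x ≠ fT x}).toReal := by
    intro h'
    have t1 : (μT {x | h x ≠ fT x}).toReal ≤
        (μT {x | h x ≠ (h' : X → Y) x}).toReal + (μT {x | (h' : X → Y) x ≠ fT x}).toReal := by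
      apply tri_aux_s10
      intro x hx
      by_cases hc : h x = (h' : X → Y) x
      · right; simpa [Set.mem_setOf_eq, hc] using hx
      · left; exact hc
    have t2 : (μS {x | h x ≠ (h' : X → Y) x}).toReal ≤
        (μS {x | h x ≠ fS x}).toReal + (μS {x | (h' : X → Y) x ≠ fS x}).toReal := by
      apply tri_aux_s10
      intro x hx
      by_cases hc : h x = fS x
      · right
        simp only [Set.mem_setOf_eq] at hx ⊢
        intro hcon
        exact hx (hc.trans hcon.symm)
      · left; exact hc
    have t3 : |(μS {x | h x ≠ (h' : X → Y) x}).toReal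
        - (μT {x | h x ≠ (h' : X → Y) x}).toReal| ≤ S := by
      have := le_ciSup hbdd ((⟨h, hh⟩ : H), h')
      simpa using this
    have t3' : (μT {x | h x ≠ (h' : X → Y) x}).toReal ≤
        (μS {x | h x ≠ (h' : X → Y) x}).toReal + S := by
      have := abs_le.mp t3
      linarith [this.1]
    linarith
  have hinf : (μT {x | h x ≠ fT x}).toReal - (μS {x | h x ≠ fS x}).toReal - S ≤
      ⨅ h' : H, ((μS {x | (h' : X → Y) x ≠ fS x}).toReal
        + (μT {x | (h' : X → Y) x ≠ fT x}).toReal) :=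
    le_ciInf key
  have : (1:ℝ)/2 * (2 * S) = S := by ring
  linarith [hinf, this.ge]
end
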